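/- Let Φ(x, y) := 1/(4π‖x − y‖) for x ≠ y in ℝ³. For q ∈ ℝ², write q̂ := (q₁, q₂, 0) ∈ ℝ³. Let q₊, q₋ ∈ ℝ² be distinct, let h > 0, and define for x ∈ ℝ³ off the electrodes: v^h(x) := (1/(πh²))·(∫_{B(q₊,h)} Φ(x, ŷ) dy − ∫_{B(q₋,h)} Φ(x, ŷ) dy) and v(x) := Φ(x, q̂₊) − Φ(x, q̂₋), where B(q,h) ⊂ ℝ² is the open disk of radius h centered at q. Then for every x ∈ ℝ³ with ‖x − q̂₊‖ > 2h and ‖x − q̂₋‖ > 2h, |v^h(x) − v(x)| ≤ h/(π‖x − q̂₊‖²) + h/(π‖x − q̂₋‖²). -/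

import Mathlib

open Real MeasureTheory Metric

noncomputable section

/-- Embedding of a boundary point `q ∈ ℝ²` into the boundary plane `{x₃ = 0}`
of the lower half-space in `ℝ³`. -/
def hat (q : EuclideanSpace ℝ (Fin 2)) : EuclideanSpace ℝ (Fin 3) :=
  WithLp.toLp 2 ![q 0, q 1, 0]

/-- The fundamental solution of the Laplace equation in three dimensions. -/
def Phi (x y : EuclideanSpace ℝ (Fin 3)) : ℝ := 1 / (4 * Real.pi * ‖x - y‖)


lemma hat_norm_sub (y q : EuclideanSpace ℝ (Fin 2)) : ‖hat y - hat q‖ = ‖y - q‖ := by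
  rw [EuclideanSpace.norm_eq, EuclideanSpace.norm_eq]
  congr 1
  simp [hat, Fin.sum_univ_three, Fin.sum_univ_two, PiLp.sub_apply]

lemma hat_continuous : Continuous hat := by
  have h1 : Continuous (fun y : EuclideanSpace ℝ (Fin 2) => (![y 0, y 1, (0:ℝ)] : Fin 3 → ℝ)) := by
    apply continuous_pi
    intro i
    fin_cases i
    · exact (EuclideanSpace.proj (0 : Fin 2)).continuous
    · exact (EuclideanSpace.proj (1 : Fin 2)).continuous
    · exact continuous_const
  exact (PiLp.continuous_toLp (p := 2) (β := fun _ : Fin 3 => ℝ)).comp h1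

lemma vol_ball2 (q : EuclideanSpace ℝ (Fin 2)) (h : ℝ) (hh : 0 ≤ h) :
    (volume (Metric.ball q h)).toReal = Real.pi * h ^ 2 := by
  rw [EuclideanSpace.volume_ball]
  have h2 : (((2:ℕ):ℝ))/2 + 1 = 2 := by norm_num
  rw [Fintype.card_fin, h2, Real.Gamma_two, div_one, Real.sq_sqrt Real.pi_pos.le,
    ENNReal.toReal_mul, ENNReal.toReal_pow, ENNReal.toReal_ofReal hh,
    ENNReal.toReal_ofReal Real.pi_pos.le]
  ring

lemma single_estimate (x : EuclideanSpace ℝ (Fin 3)) (q : EuclideanSpace ℝ (Fin 2))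
    (h : ℝ) (hh : 0 < h) (hd : 2 * h < ‖x - hat q‖) :
    |(1 / (Real.pi * h ^ 2)) * (∫ y in Metric.ball q h, Phi x (hat y)) - Phi x (hat q)|
      ≤ h / (Real.pi * ‖x - hat q‖ ^ 2) := by
  set d := ‖x - hat q‖ with hdd
  have hd0 : 0 < d := lt_trans (by positivity) hd
  -- lower bound on distances on the closed ball
  have hlow : ∀ y ∈ closedBall q h, d - h ≤ ‖x - hat y‖ := by
    intro y hy
    have h1 : ‖x - hat q‖ ≤ ‖x - hat y‖ + ‖hat y - hat q‖ := norm_sub_le_norm_sub_add_norm_sub _ _ _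
    rw [hat_norm_sub] at h1
    have h2 : ‖y - q‖ ≤ h := by rwa [mem_closedBall, dist_eq_norm] at hy
    linarith
  have hpos : ∀ y ∈ closedBall q h, 0 < ‖x - hat y‖ := fun y hy =>
    lt_of_lt_of_le (by linarith) (hlow y hy)
  -- pointwise estimate
  have hpt : ∀ y ∈ closedBall q h,
      |Phi x (hat y) - Phi x (hat q)| ≤ h / (2 * Real.pi * d ^ 2) := by
    intro y hy
    have ha := hpos y hy
    have hal := hlow y hy
    set a := ‖x - hat y‖ with haa
    have hnum : |d - a| ≤ h := by
      have := abs_norm_sub_norm_le (x - hat q) (x - hat y)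
      have h3 : (x - hat q) - (x - hat y) = hat y - hat q := by abel
      rw [h3, hat_norm_sub] at this
      have h2 : ‖y - q‖ ≤ h := by rwa [mem_closedBall, dist_eq_norm] at hy
      exact this.trans h2
    have key : Phi x (hat y) - Phi x (hat q) = (d - a) / (4 * Real.pi * a * d) := by
      rw [Phi, Phi, ← hdd, ← haa]
      field_simp
    rw [key, abs_div]
    rw [abs_of_pos (by positivity : (0:ℝ) < 4 * Real.pi * a * d)]
    have h2a : d ≤ 2 * a := by linarith
    have hden : 2 * Real.pi * d ^ 2 ≤ 4 * Real.pi * a * d := by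
      nlinarith [mul_le_mul_of_nonneg_left h2a
        (mul_nonneg (mul_nonneg (by norm_num : (0:ℝ) ≤ 2) Real.pi_pos.le) hd0.le)]
    exact div_le_div₀ hh.le hnum (by positivity) hden
  -- integrability
  have hcont : ContinuousOn (fun y => Phi x (hat y)) (closedBall q h) := by
    unfold Phi
    apply ContinuousOn.div continuousOn_const
    · exact (continuous_const.mul ((continuous_const.sub hat_continuous).norm)).continuousOn
    · intro y hy
      have := hpos y hy
      positivity
  have hint : IntegrableOn (fun y => Phi x (hat y)) (closedBall q h) :=
    hcont.integrableOn_compact (isCompact_closedBall q h)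
  have hball : IntegrableOn (fun y => Phi x (hat y)) (Metric.ball q h) :=
    hint.mono_set ball_subset_closedBall
  have hvolball : volume (Metric.ball q h) < ⊤ := measure_ball_lt_top
  have hvol : (volume (Metric.ball q h)).toReal = Real.pi * h ^ 2 := vol_ball2 q h hh.le
  -- integral estimate
  have key : |(∫ y in Metric.ball q h, Phi x (hat y)) - Real.pi * h ^ 2 * Phi x (hat q)|
      ≤ (h / (2 * Real.pi * d ^ 2)) * (Real.pi * h ^ 2) := by
    have hsplit : (∫ y in Metric.ball q h, Phi x (hat y)) - Real.pi * h ^ 2 * Phi x (hat q)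
        = ∫ y in Metric.ball q h, (Phi x (hat y) - Phi x (hat q)) := by
      rw [integral_sub hball (integrableOn_const hvolball.ne),
        setIntegral_const, smul_eq_mul, measureReal_def, hvol]
    rw [hsplit, ← hvol, ← Real.norm_eq_abs]
    apply norm_setIntegral_le_of_norm_le_const_ae hvolball
    filter_upwards [ae_restrict_mem measurableSet_ball] with y hy
    rw [Real.norm_eq_abs]
    exact hpt y (ball_subset_closedBall hy)
  -- final arithmetic
  have hph : (0:ℝ) < Real.pi * h ^ 2 := by positivity
  have heq : (1 / (Real.pi * h ^ 2)) * (∫ y in Metric.ball q h, Phi x (hat y)) - Phi x (hat q)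
      = (1 / (Real.pi * h ^ 2)) *
        ((∫ y in Metric.ball q h, Phi x (hat y)) - Real.pi * h ^ 2 * Phi x (hat q)) := by
    field_simp
  rw [heq, abs_mul, abs_of_pos (by positivity : (0:ℝ) < 1 / (Real.pi * h ^ 2))]
  calc (1 / (Real.pi * h ^ 2)) *
        |(∫ y in Metric.ball q h, Phi x (hat y)) - Real.pi * h ^ 2 * Phi x (hat q)|
      ≤ (1 / (Real.pi * h ^ 2)) * ((h / (2 * Real.pi * d ^ 2)) * (Real.pi * h ^ 2)) := by
        gcongr
    _ = h / (2 * Real.pi * d ^ 2) := by field_simp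
    _ ≤ h / (Real.pi * d ^ 2) :=
        div_le_div₀ hh.le le_rfl (by positivity) (by nlinarith [Real.pi_pos])
/-- pointwise convergence, at rate `h`, of the two-electrode
potential `v^h` to the point-electrode potential `v` away from the
electrodes. -/
theorem electrode_pair_potential_estimate
    (qp qm : EuclideanSpace ℝ (Fin 2)) (hq : qp ≠ qm) (h : ℝ) (hh : 0 < h)
    (vh v : EuclideanSpace ℝ (Fin 3) → ℝ)
    (hvh : ∀ x, vh x = (1 / (Real.pi * h ^ 2)) *
      ((∫ y in Metric.ball qp h, Phi x (hat y)) - ∫ y in Metric.ball qm h, Phi x (hat y)))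
    (hv : ∀ x, v x = Phi x (hat qp) - Phi x (hat qm)) :
    ∀ x : EuclideanSpace ℝ (Fin 3),
      2 * h < ‖x - hat qp‖ → 2 * h < ‖x - hat qm‖ →
      |vh x - v x| ≤ h / (Real.pi * ‖x - hat qp‖ ^ 2) + h / (Real.pi * ‖x - hat qm‖ ^ 2) := by
  intro x hp hm
  rw [hvh, hv]
  have heq : (1 / (Real.pi * h ^ 2)) *
        ((∫ y in Metric.ball qp h, Phi x (hat y)) - ∫ y in Metric.ball qm h, Phi x (hat y))
      - (Phi x (hat qp) - Phi x (hat qm))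
      = ((1 / (Real.pi * h ^ 2)) * (∫ y in Metric.ball qp h, Phi x (hat y)) - Phi x (hat qp))
      - ((1 / (Real.pi * h ^ 2)) * (∫ y in Metric.ball qm h, Phi x (hat y)) - Phi x (hat qm)) := by
    ring
  rw [heq]
  exact (abs_sub _ _).trans (add_le_add (single_estimate x qp h hh hp)
    (single_estimate x qm h hh hm))
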